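/- arXiv:cmp-lg/9709013 — 2 statements merged into one kernel-verified Lean document; each statement's English description precedes it below -/
import Mathlib

section
/- For abstract feature structures A′ and B′, and for every A ∈ Conc(A′) and B ∈ Conc(B′): A ⊑ B if and only if A′ ≼ B′. -/
def deltaStar {F N : Type*} (d : N → F → Option N) : N → List F → Option N
  | q, [] => some q
  | q, f :: rest => (d q f).bind fun q' => deltaStar d q' rest

/-- A typed feature structure: a finite rooted graph with feature-labelled arcs,
all of whose nodes are reachable from the root. -/
structure TFS (F N : Type*) where
  Q : Finset N
  root : N
  root_mem : root ∈ Q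
  delta : N → F → Option N
  delta_dom : ∀ q f q', delta q f = some q' → q ∈ Q ∧ q' ∈ Q
  reach : ∀ q ∈ Q, ∃ π : List F, deltaStar delta root π = some q

/-- The value `δ(q̄, π)` of a path from the root. -/
def TFS.val {F N : Type*} (A : TFS F N) (π : List F) : Option N :=
  deltaStar A.delta A.root π

/-- `Π(A)`, the set of paths of `A`. -/
def TFS.paths {F N : Type*} (A : TFS F N) : Set (List F) :=
  {π | (A.val π).isSome}

/-- A TFS is cyclic if some node returns to itself via a nonempty path. -/
def TFS.Cyclic {F N : Type*} (A : TFS F N) : Prop :=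
  ∃ q ∈ A.Q, ∃ α : List F, α ≠ [] ∧ deltaStar A.delta q α = some q

/-- Subsumption of TFSs via a subsumption morphism. -/
def Subsumes {F N T : Type*} [PartialOrder T] (θ : N → T) (A B : TFS F N) : Prop :=
  ∃ h : N → N,
    (∀ q ∈ A.Q, h q ∈ B.Q) ∧
    h A.root = B.root ∧
    (∀ q ∈ A.Q, θ q ≤ θ (h q)) ∧
    (∀ q f q', A.delta q f = some q' → B.delta (h q) f = some (h q'))

/-- Bounded completeness: every up-bounded subset has a least upper bound. -/
def BddComplete (T : Type*) [PartialOrder T] : Prop :=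
  ∀ S : Set T, (∃ u, ∀ t ∈ S, t ≤ u) → ∃ l, IsLUB S l

/-- A pre-abstract feature structure: a partial assignment of types to paths
(whose domain is the path set `Π`) together with a reentrancy relation. -/
structure PreAFS (F T : Type*) where
  theta : List F → Option T
  rel : List F → List F → Prop

/-- The path set `Π` of a pre-AFS. -/
def PreAFS.dom {F T : Type*} (A : PreAFS F T) : Set (List F) :=
  {π | (A.theta π).isSome}

/-- The pre-AFS conditions: `Π` is nonempty and `≈ ⊆ Π × Π`. -/
def IsPreAFS {F T : Type*} (A : PreAFS F T) : Prop :=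
  A.dom.Nonempty ∧ ∀ π₁ π₂, A.rel π₁ π₂ → π₁ ∈ A.dom ∧ π₂ ∈ A.dom

/-- `Π` is prefix-closed. -/
def PrefixClosed {F T : Type*} (A : PreAFS F T) : Prop :=
  ∀ π α : List F, π ++ α ∈ A.dom → π ∈ A.dom

/-- Fusion-closedness. -/
def FusionClosed {F T : Type*} (A : PreAFS F T) : Prop :=
  ∀ π π' α α' : List F, π ++ α ∈ A.dom → π' ++ α' ∈ A.dom → A.rel π π' →
    π ++ α' ∈ A.dom ∧ π' ++ α ∈ A.dom ∧
    A.rel (π ++ α') (π' ++ α') ∧ A.rel (π' ++ α) (π ++ α)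

/-- `≈` is an equivalence relation on `Π`. -/
def EquivOnDom {F T : Type*} (A : PreAFS F T) : Prop :=
  (∀ π ∈ A.dom, A.rel π π) ∧
  (∀ π₁ π₂, A.rel π₁ π₂ → A.rel π₂ π₁) ∧
  (∀ π₁ π₂ π₃, A.rel π₁ π₂ → A.rel π₂ π₃ → A.rel π₁ π₃)

/-- `≈` has finitely many equivalence classes. -/
def FiniteIndex {F T : Type*} (A : PreAFS F T) : Prop :=
  {C : Set (List F) | ∃ π ∈ A.dom, C = {π' | A.rel π π'}}.Finite

/-- `Θ` respects the equivalence `≈`. -/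
def RespectsRel {F T : Type*} (A : PreAFS F T) : Prop :=
  ∀ π₁ π₂, A.rel π₁ π₂ → A.theta π₁ = A.theta π₂

/-- Abstract feature structures. -/
def IsAFS {F T : Type*} (A : PreAFS F T) : Prop :=
  IsPreAFS A ∧ PrefixClosed A ∧ FusionClosed A ∧
    EquivOnDom A ∧ FiniteIndex A ∧ RespectsRel A

/-- Bounded completeness: every up-bounded subset has a least upper bound. -/
def BddCompleteTypes (T : Type*) [PartialOrder T] : Prop :=
  ∀ S : Set T, (∃ u, ∀ t ∈ S, t ≤ u) → ∃ l, IsLUB S l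

/-- The order `≼` on (pre-)AFSs. -/
def AbsLE {F T : Type*} [PartialOrder T] (A B : PreAFS F T) : Prop :=
  A.dom ⊆ B.dom ∧
  (∀ π₁ π₂, A.rel π₁ π₂ → B.rel π₁ π₂) ∧
  ∀ π ∈ A.dom, ∀ t₁ t₂ : T, A.theta π = some t₁ → B.theta π = some t₂ → t₁ ≤ t₂

/-- The concretization `Conc(A)` of a pre-AFS `A`: all TFSs obtained by injecting
the `≈`-equivalence classes (represented via a choice function `g` constant exactly
on classes) into the nodes, with root the class of `ε`, types given by `Θ`, and
transitions `δ(q_[π], f) = q_[πf]` whenever `πf ∈ Π`. -/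
def Conc {F N T : Type*} (θ : N → T) (A : PreAFS F T) : Set (TFS F N) :=
  {B | ∃ g : List F → N,
    B.root = g [] ∧
    (B.Q : Set N) = g '' A.dom ∧
    (∀ π₁ ∈ A.dom, ∀ π₂ ∈ A.dom, (g π₁ = g π₂ ↔ A.rel π₁ π₂)) ∧
    (∀ π ∈ A.dom, A.theta π = some (θ (g π))) ∧
    ∀ π ∈ A.dom, ∀ f : F,
      (π ++ [f] ∈ A.dom → B.delta (g π) f = some (g (π ++ [f]))) ∧
      (π ++ [f] ∉ A.dom → B.delta (g π) f = none)}

/-!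
A concretization of `A'` identifies each node with the `≈`-class of the paths reaching it: the node
reached by `π` from the root is `g π`, and `π` reaches a node iff `π ∈ Π`. A subsumption morphism
`h : A → B` therefore maps `g π` to `g' π`, which gives `Π_A ⊆ Π_B`, `≈_A ⊆ ≈_B` and the type
inequalities. Conversely, if `A' ≼ B'` then `g π ↦ g' π` is well defined, because `g π₁ = g π₂`
means `π₁ ≈_A π₂`, hence `π₁ ≈_B π₂`, hence `g' π₁ = g' π₂`; and it is a subsumption morphism.
-/

theorem deltaStar_append {F N : Type*} (d : N → F → Option N) (q : N) (α β : List F) :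
    deltaStar d q (α ++ β) = (deltaStar d q α).bind fun q' => deltaStar d q' β := by
  induction α generalizing q with
  | nil => simp [deltaStar]
  | cons f α ih =>
    simp only [List.cons_append, deltaStar]
    cases d q f <;> simp [ih]

theorem deltaStar_map {F N M : Type*} {d : N → F → Option N} {d' : M → F → Option M}
    (h : N → M) (hd : ∀ q f q', d q f = some q' → d' (h q) f = some (h q')) :
    ∀ (π : List F) (q₀ q : N), deltaStar d q₀ π = some q → deltaStar d' (h q₀) π = some (h q)
  | [], q₀, q, hq => by simp_all [deltaStar]
  | f :: π, q₀, q, hq => by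
    obtain ⟨q₁, hq₁, hπ⟩ := Option.bind_eq_some_iff.mp hq
    simpa only [deltaStar, hd _ _ _ hq₁, Option.bind_some] using deltaStar_map h hd π q₁ q hπ

namespace TFS

variable {F N : Type*}

theorem val_append_singleton (A : TFS F N) (π : List F) (f : F) :
    A.val (π ++ [f]) = (A.val π).bind fun q => A.delta q f := by
  simp [val, deltaStar_append, deltaStar]

theorem val_map {A B : TFS F N} (h : N → N) (hroot : h A.root = B.root)
    (hδ : ∀ q f q', A.delta q f = some q' → B.delta (h q) f = some (h q')) {π : List F} {q : N}
    (hq : A.val π = some q) : B.val π = some (h q) := by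
  rw [val, ← hroot]
  exact deltaStar_map h hδ π A.root q hq

end TFS

/-- `g` sends each path of `A'` to the node of `A` representing its `≈`-class. -/
structure IsConcretization {F N T : Type*} (θ : N → T) (A' : PreAFS F T) (A : TFS F N)
    (g : List F → N) : Prop where
  root_eq : A.root = g []
  Q_eq : (A.Q : Set N) = g '' A'.dom
  eq_iff_rel : ∀ π₁ ∈ A'.dom, ∀ π₂ ∈ A'.dom, g π₁ = g π₂ ↔ A'.rel π₁ π₂
  theta_eq : ∀ π ∈ A'.dom, A'.theta π = some (θ (g π))
  delta_of_mem : ∀ π ∈ A'.dom, ∀ f, π ++ [f] ∈ A'.dom → A.delta (g π) f = some (g (π ++ [f]))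
  delta_of_notMem : ∀ π ∈ A'.dom, ∀ f, π ++ [f] ∉ A'.dom → A.delta (g π) f = none

theorem exists_isConcretization_of_mem_conc {F N T : Type*} {θ : N → T} {A' : PreAFS F T}
    {A : TFS F N} (hA : A ∈ Conc θ A') : ∃ g, IsConcretization θ A' A g := by
  obtain ⟨g, hroot, hQ, heq, htheta, hdelta⟩ := hA
  exact ⟨g, hroot, hQ, heq, htheta, fun π hπ f => (hdelta π hπ f).1,
    fun π hπ f => (hdelta π hπ f).2⟩

theorem IsPreAFS.nil_mem_dom {F T : Type*} {A : PreAFS F T} (hA : IsPreAFS A)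
    (hclosed : PrefixClosed A) : [] ∈ A.dom := by
  obtain ⟨π, hπ⟩ := hA.1
  exact hclosed [] π hπ

namespace IsConcretization

variable {F N T : Type*} {θ : N → T} {A' B' : PreAFS F T} {A B : TFS F N} {g g' : List F → N}

theorem mem_Q (hA : IsConcretization θ A' A g) {π : List F} (hπ : π ∈ A'.dom) : g π ∈ A.Q := by
  rw [← Finset.mem_coe, hA.Q_eq]
  exact Set.mem_image_of_mem g hπ

theorem exists_of_mem_Q (hA : IsConcretization θ A' A g) {q : N} (hq : q ∈ A.Q) :
    ∃ π ∈ A'.dom, g π = q := by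
  rwa [← Finset.mem_coe, hA.Q_eq] at hq

theorem val_eq_some_iff (hA : IsConcretization θ A' A g) (hclosed : PrefixClosed A')
    (hnil : [] ∈ A'.dom) (π : List F) (q : N) : A.val π = some q ↔ π ∈ A'.dom ∧ q = g π := by
  induction π using List.reverseRecOn generalizing q with
  | nil => simp [TFS.val, deltaStar, hA.root_eq, hnil, eq_comm]
  | append_singleton π f ih =>
    rw [TFS.val_append_singleton]
    by_cases hπ : π ∈ A'.dom
    · rw [(ih _).2 ⟨hπ, rfl⟩, Option.bind_some]
      by_cases hπf : π ++ [f] ∈ A'.dom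
      · simp [hA.delta_of_mem π hπ f hπf, hπf, eq_comm]
      · simp [hA.delta_of_notMem π hπ f hπf, hπf]
    · have hnone : A.val π = none :=
        Option.eq_none_iff_forall_ne_some.mpr fun q' h => hπ ((ih q').1 h).1
      simpa [hnone] using fun h => absurd (hclosed π [f] h) hπ

theorem mem_dom_and_map_eq (hA : IsConcretization θ A' A g) (hB : IsConcretization θ B' B g')
    (hA'closed : PrefixClosed A') (hA'nil : [] ∈ A'.dom)
    (hB'closed : PrefixClosed B') (hB'nil : [] ∈ B'.dom) {h : N → N} (hroot : h A.root = B.root)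
    (hδ : ∀ q f q', A.delta q f = some q' → B.delta (h q) f = some (h q'))
    {π : List F} (hπ : π ∈ A'.dom) : π ∈ B'.dom ∧ h (g π) = g' π := by
  have hval : A.val π = some (g π) := (hA.val_eq_some_iff hA'closed hA'nil π _).2 ⟨hπ, rfl⟩
  exact (hB.val_eq_some_iff hB'closed hB'nil π _).1 (TFS.val_map h hroot hδ hval)

theorem absLE_of_subsumes (hA : IsConcretization θ A' A g) (hB : IsConcretization θ B' B g')
    (hA'rel : ∀ π₁ π₂, A'.rel π₁ π₂ → π₁ ∈ A'.dom ∧ π₂ ∈ A'.dom)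
    (hA'closed : PrefixClosed A') (hA'nil : [] ∈ A'.dom)
    (hB'closed : PrefixClosed B') (hB'nil : [] ∈ B'.dom) [PartialOrder T]
    (hAB : Subsumes θ A B) : AbsLE A' B' := by
  obtain ⟨h, -, hroot, hθ, hδ⟩ := hAB
  have key : ∀ {π}, π ∈ A'.dom → π ∈ B'.dom ∧ h (g π) = g' π :=
    hA.mem_dom_and_map_eq hB hA'closed hA'nil hB'closed hB'nil hroot hδ
  refine ⟨fun π hπ => (key hπ).1, fun π₁ π₂ hrel => ?_, fun π hπ t₁ t₂ ht₁ ht₂ => ?_⟩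
  · obtain ⟨hπ₁, hπ₂⟩ := hA'rel π₁ π₂ hrel
    refine (hB.eq_iff_rel π₁ (key hπ₁).1 π₂ (key hπ₂).1).1 ?_
    rw [← (key hπ₁).2, ← (key hπ₂).2, (hA.eq_iff_rel π₁ hπ₁ π₂ hπ₂).2 hrel]
  · rw [hA.theta_eq π hπ, Option.some_inj] at ht₁
    rw [hB.theta_eq π (key hπ).1, Option.some_inj] at ht₂
    rw [← ht₁, ← ht₂, ← (key hπ).2]
    exact hθ _ (hA.mem_Q hπ)

theorem subsumes_of_absLE (hA : IsConcretization θ A' A g) (hB : IsConcretization θ B' B g')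
    (hA'nil : [] ∈ A'.dom) [PartialOrder T] (hAB : AbsLE A' B') : Subsumes θ A B := by
  obtain ⟨hdom, hrel, htheta⟩ := hAB
  let gA : A'.dom → N := fun π => g π
  let gB : A'.dom → N := fun π => g' π
  have hfactors : gB.FactorsThrough gA := fun π₁ π₂ heq =>
    (hB.eq_iff_rel _ (hdom π₁.2) _ (hdom π₂.2)).2
      (hrel _ _ ((hA.eq_iff_rel _ π₁.2 _ π₂.2).1 heq))
  let h := Function.extend gA gB id
  have hg : ∀ π ∈ A'.dom, h (g π) = g' π := fun π hπ => hfactors.extend_apply id ⟨π, hπ⟩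
  refine ⟨h, fun q hq => ?_, by rw [hA.root_eq, hg [] hA'nil, hB.root_eq], fun q hq => ?_,
    fun q f q' hq' => ?_⟩
  · obtain ⟨π, hπ, rfl⟩ := hA.exists_of_mem_Q hq
    exact hg π hπ ▸ hB.mem_Q (hdom hπ)
  · obtain ⟨π, hπ, rfl⟩ := hA.exists_of_mem_Q hq
    rw [hg π hπ]
    exact htheta π hπ _ _ (hA.theta_eq π hπ) (hB.theta_eq π (hdom hπ))
  · obtain ⟨π, hπ, rfl⟩ := hA.exists_of_mem_Q (A.delta_dom q f q' hq').1
    by_cases hπf : π ++ [f] ∈ A'.dom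
    · rw [hA.delta_of_mem π hπ f hπf, Option.some_inj] at hq'
      rw [hg π hπ, ← hq', hg _ hπf]
      exact hB.delta_of_mem π (hdom hπ) f (hdom hπf)
    · simp [hA.delta_of_notMem π hπ f hπf] at hq'

end IsConcretization

theorem conc_subsumes_iff_absLE_general
    {F N T : Type*} [PartialOrder T]
    (θ : N → T)
    (A' B' : PreAFS F T) (hA' : IsAFS A') (hB' : IsAFS B')
    (A B : TFS F N) (hA : A ∈ Conc θ A') (hB : B ∈ Conc θ B') :
    Subsumes θ A B ↔ AbsLE A' B' := by
  obtain ⟨g, hg⟩ := exists_isConcretization_of_mem_conc hA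
  obtain ⟨g', hg'⟩ := exists_isConcretization_of_mem_conc hB
  obtain ⟨hA'pre, hA'closed, -⟩ := hA'
  obtain ⟨hB'pre, hB'closed, -⟩ := hB'
  have hA'nil := hA'pre.nil_mem_dom hA'closed
  have hB'nil := hB'pre.nil_mem_dom hB'closed
  exact ⟨hg.absLE_of_subsumes hg' hA'pre.2 hA'closed hA'nil hB'closed hB'nil,
    hg.subsumes_of_absLE hg' hA'nil⟩

/-- for AFSs `A′`, `B′` and any `A ∈ Conc(A′)`, `B ∈ Conc(B′)`:
`A ⊑ B` iff `A′ ≼ B′`. -/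
theorem conc_subsumes_iff_absLE
    {F N T : Type*} [Finite F] [Finite T] [PartialOrder T] [Infinite N]
    (hbc : BddComplete T) (θ : N → T)
    (hrich : ∀ t : T, {q : N | θ q = t}.Infinite)
    (A' B' : PreAFS F T) (hA' : IsAFS A') (hB' : IsAFS B')
    (A B : TFS F N) (hA : A ∈ Conc θ A') (hB : B ∈ Conc θ B') :
    Subsumes θ A B ↔ AbsLE A' B' :=
  conc_subsumes_iff_absLE_general θ A' B' hA' hB' A B hA hB
end

section
/- Two typed feature structures A and B are alphabetic variants (A ⊑ B and B ⊑ A) if and only if Abs(A) = Abs(B). -/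
/-- The abstraction of a TFS: `Π_A = Π(A)`, `Θ_A(π) = θ(δ(q̄,π))`,
and `π₁ ≈_A π₂` iff both paths lead to the same node. -/
def Abs {F N T : Type*} (θ : N → T) (A : TFS F N) : PreAFS F T :=
  ⟨fun π => (A.val π).map θ,
   fun π₁ π₂ => ∃ q, A.val π₁ = some q ∧ A.val π₂ = some q⟩

lemma deltaStar_snoc {F N : Type*} (d : N → F → Option N) (q : N) (π : List F) (f : F) :
    deltaStar d q (π ++ [f]) = (deltaStar d q π).bind (fun p => d p f) := by
  induction π generalizing q with
  | nil => simp [deltaStar]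
  | cons g rest ih =>
    simp only [List.cons_append, deltaStar]
    cases d q g <;> simp [ih]

lemma deltaStar_mem {F N : Type*} (A : TFS F N) :
    ∀ (π : List F) (r q : N), r ∈ A.Q → deltaStar A.delta r π = some q → q ∈ A.Q := by
  intro π
  induction π with
  | nil => intro r q hr h; simp [deltaStar] at h; exact h ▸ hr
  | cons f rest ih =>
    intro r q hr h
    simp only [deltaStar] at h
    cases hd : A.delta r f with
    | none => rw [hd] at h; simp at h
    | some r' =>
      rw [hd] at h
      exact ih r' q (A.delta_dom r f r' hd).2 h

lemma val_mem {F N : Type*} (A : TFS F N) {π : List F} {q : N}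
    (h : A.val π = some q) : q ∈ A.Q :=
  deltaStar_mem A π A.root q A.root_mem h

lemma morph_val {F N T : Type*} [PartialOrder T] {θ : N → T} {A B : TFS F N}
    {h : N → N}
    (hδ : ∀ q f q', A.delta q f = some q' → B.delta (h q) f = some (h q'))
    : ∀ (π : List F) (q p : N), deltaStar A.delta q π = some p →
      deltaStar B.delta (h q) π = some (h p) := by
  intro π
  induction π with
  | nil => intro q p hq; simp [deltaStar] at hq ⊢; exact congrArg h hq
  | cons f rest ih =>
    intro q p hq
    simp only [deltaStar] at hq ⊢
    cases hd : A.delta q f with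
    | none => rw [hd] at hq; simp at hq
    | some q' =>
      rw [hd] at hq
      rw [hδ q f q' hd]
      exact ih q' p hq

/-- `A` and `B` are alphabetic variants (`A ⊑ B` and `B ⊑ A`)
iff `Abs(A) = Abs(B)`. -/
theorem variants_iff_abs_eq
    {F N T : Type*} [Finite F] [Finite T] [PartialOrder T] [Infinite N]
    (hbc : BddComplete T) (θ : N → T)
    (A B : TFS F N) :
    (Subsumes θ A B ∧ Subsumes θ B A) ↔ Abs θ A = Abs θ B := by
  classical
  constructor
  · rintro ⟨⟨h, hQ, hroot, hθ, hδ⟩, ⟨g, gQ, groot, gθ, gδ⟩⟩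
    have hval : ∀ π q, A.val π = some q → B.val π = some (h q) := by
      intro π q hv
      have := morph_val (θ := θ) hδ π A.root q hv
      rwa [hroot] at this
    have gval : ∀ π p, B.val π = some p → A.val π = some (g p) := by
      intro π p hv
      have := morph_val (θ := θ) gδ π B.root p hv
      rwa [groot] at this
    unfold Abs
    congr 1
    · funext π
      cases hA : A.val π with
      | none =>
        cases hB : B.val π with
        | none => rfl
        | some p => rw [gval π p hB] at hA; simp at hA
      | some q =>
        have hB := hval π q hA
        rw [hB]
        simp only [Option.map_some]
        have hgq : A.val π = some (g (h q)) := gval π (h q) hB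
        have heq : g (h q) = q := by
          rw [hA] at hgq; exact (Option.some_inj.mp hgq).symm
        have h1 : θ q ≤ θ (h q) := hθ q (val_mem A hA)
        have h2 : θ (h q) ≤ θ q := by
          have := gθ (h q) (val_mem B hB); rwa [heq] at this
        exact congrArg some (le_antisymm h1 h2)
    · funext π₁ π₂
      apply propext
      constructor
      · rintro ⟨q, h1, h2⟩
        exact ⟨h q, hval π₁ q h1, hval π₂ q h2⟩
      · rintro ⟨p, h1, h2⟩
        exact ⟨g p, gval π₁ p h1, gval π₂ p h2⟩
  · intro hAbs
    have htheta : ∀ π, (A.val π).map θ = (B.val π).map θ := by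
      intro π
      have := congrArg PreAFS.theta hAbs
      exact congrFun this π
    have hrel : ∀ π₁ π₂,
        (∃ q, A.val π₁ = some q ∧ A.val π₂ = some q) ↔
        (∃ p, B.val π₁ = some p ∧ B.val π₂ = some p) := by
      intro π₁ π₂
      have := congrArg PreAFS.rel hAbs
      exact iff_of_eq (congrFun (congrFun this π₁) π₂)
    have hdomAB : ∀ π q, A.val π = some q → ∃ p, B.val π = some p ∧ θ q = θ p := by
      intro π q hv
      have := htheta π
      rw [hv] at this
      cases hB : B.val π with
      | none => rw [hB] at this; simp at this
      | some p =>
        rw [hB] at this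
        simp only [Option.map_some, Option.some.injEq] at this
        exact ⟨p, rfl, this⟩
    have hdomBA : ∀ π p, B.val π = some p → ∃ q, A.val π = some q ∧ θ p = θ q := by
      intro π p hv
      have := htheta π
      rw [hv] at this
      cases hA : A.val π with
      | none => rw [hA] at this; simp at this
      | some q =>
        rw [hA] at this
        simp only [Option.map_some, Option.some.injEq] at this
        exact ⟨q, rfl, this.symm⟩
    -- construct the morphisms symmetrically
    have build : ∀ (X Y : TFS F N),
        (∀ π q, X.val π = some q → ∃ p, Y.val π = some p ∧ θ q = θ p) →
        (∀ π₁ π₂, (∃ q, X.val π₁ = some q ∧ X.val π₂ = some q) →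
          (∃ p, Y.val π₁ = some p ∧ Y.val π₂ = some p)) →
        Subsumes θ X Y := by
      intro X Y hdom hrel
      have key : ∀ q, q ∈ X.Q → ∃ p, (∀ π, X.val π = some q → Y.val π = some p) ∧
          θ q = θ p := by
        intro q hq
        obtain ⟨π₀, hπ₀⟩ := X.reach q hq
        obtain ⟨p, hp, hpθ⟩ := hdom π₀ q hπ₀
        refine ⟨p, fun π hπ => ?_, hpθ⟩
        obtain ⟨p', h1, h2⟩ := hrel π π₀ ⟨q, hπ, hπ₀⟩
        rw [hp] at h2
        rw [h1]; exact h2.symm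
      let h : N → N := fun q => if hq : q ∈ X.Q then (key q hq).choose else Y.root
      have hspec : ∀ q (hq : q ∈ X.Q) π, X.val π = some q → Y.val π = some (h q) := by
        intro q hq π hπ
        have := (key q hq).choose_spec.1 π hπ
        simpa only [h, dif_pos hq] using this
      have hθspec : ∀ q (hq : q ∈ X.Q), θ q = θ (h q) := by
        intro q hq
        have := (key q hq).choose_spec.2
        simpa only [h, dif_pos hq] using this
      refine ⟨h, ?_, ?_, ?_, ?_⟩
      · intro q hq
        obtain ⟨π, hπ⟩ := X.reach q hq
        exact val_mem Y (hspec q hq π hπ)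
      · have : Y.val [] = some (h X.root) := hspec X.root X.root_mem [] rfl
        simp only [TFS.val, deltaStar, Option.some.injEq] at this
        exact this.symm
      · intro q hq
        exact le_of_eq (hθspec q hq)
      · intro q f q' hd
        obtain ⟨hqQ, hq'Q⟩ := X.delta_dom q f q' hd
        obtain ⟨π, hπ⟩ := X.reach q hqQ
        have hπf : X.val (π ++ [f]) = some q' := by
          unfold TFS.val
          rw [deltaStar_snoc, hπ]
          simpa using hd
        have hY1 : Y.val π = some (h q) := hspec q hqQ π hπ
        have hY2 : Y.val (π ++ [f]) = some (h q') := hspec q' hq'Q (π ++ [f]) hπf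
        unfold TFS.val at hY1 hY2
        rw [deltaStar_snoc, hY1] at hY2
        simpa using hY2
    refine ⟨build A B hdomAB (fun π₁ π₂ => (hrel π₁ π₂).mp), ?_⟩
    refine build B A hdomBA (fun π₁ π₂ => (hrel π₁ π₂).mpr)
end
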